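/- arXiv:1704.07678 — 2 statements merged into one kernel-verified Lean document; each statement's English description precedes it below -/
import Mathlib

section
/- KD4_h admits the rule □Dh R: if KD4_h proves ⋀{σ_r}_{r∈R} ∧ ⋀{γ_i ∧ □_{n_i} γ_i}_{i∈I} → ⊥ and n_i < n for all i, then KD4_h proves ⋀{□n σ_r}_{r∈R} ∧ ⋀{□_{n_i} γ_i}_{i∈I} → ⊥. -/
/-- Poly-modal formulas with modalities `□n` for `n : ℕ`. -/
inductive Fm : Type
  | atom : ℕ → Fm
  | bot  : Fm
  | and  : Fm → Fm → Fm
  | or   : Fm → Fm → Fm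
  | imp  : Fm → Fm → Fm
  | neg  : Fm → Fm
  | box  : ℕ → Fm → Fm
  deriving DecidableEq

def Fm.top : Fm := Fm.neg Fm.bot

/-- `i` occurs as a modality index in the formula. -/
def occursBox (i : ℕ) : Fm → Prop
  | .atom _ => False
  | .bot => False
  | .and A B => occursBox i A ∨ occursBox i B
  | .or A B => occursBox i A ∨ occursBox i B
  | .imp A B => occursBox i A ∨ occursBox i B
  | .neg A => occursBox i A
  | .box n A => i = n ∨ occursBox i A

/-- `n` is strictly greater than every modality index occurring in `A`
    (the paper's "`n > r(A)`"). -/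
def BoxLt (A : Fm) (n : ℕ) : Prop := ∀ i, occursBox i A → i < n

/-- The language `L∞`: each box index strictly exceeds all box indices in its scope. -/
inductive Linf : Fm → Prop
  | atom (k : ℕ) : Linf (.atom k)
  | bot : Linf .bot
  | and {A B : Fm} : Linf A → Linf B → Linf (.and A B)
  | or {A B : Fm} : Linf A → Linf B → Linf (.or A B)
  | imp {A B : Fm} : Linf A → Linf B → Linf (.imp A B)
  | neg {A : Fm} : Linf A → Linf (.neg A)
  | box {A : Fm} (n : ℕ) : Linf A → BoxLt A n → Linf (.box n A)

/-- Boolean evaluation treating atoms and boxed formulas as propositional atoms. -/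
def evalWith (v : Fm → Bool) : Fm → Bool
  | .atom k => v (.atom k)
  | .bot => false
  | .and A B => evalWith v A && evalWith v B
  | .or A B => evalWith v A || evalWith v B
  | .imp A B => !(evalWith v A) || evalWith v B
  | .neg A => !(evalWith v A)
  | .box n A => v (.box n A)

/-- Classical propositional tautologies (on `L∞`-formulas as atoms). -/
def Taut (A : Fm) : Prop := ∀ v, evalWith v A = true

def axH (F : Fm) : Prop := ∃ A n, Linf (Fm.box n A) ∧ F = (Fm.box n A).imp (Fm.box (n+1) A)
def axK (F : Fm) : Prop := ∃ A B n, Linf (Fm.box n (A.imp B)) ∧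
    F = (Fm.box n (A.imp B)).imp ((Fm.box n A).imp (Fm.box n B))
def axFour (F : Fm) : Prop := ∃ A n, Linf (Fm.box n A) ∧
    F = (Fm.box n A).imp (Fm.box (n+1) (Fm.box n A))
def axD (F : Fm) : Prop := ∃ n, F = Fm.neg (Fm.box n Fm.bot)
def axT (F : Fm) : Prop := ∃ A n, Linf (Fm.box n A) ∧ F = (Fm.box n A).imp A
def axL (F : Fm) : Prop := ∃ A n, Linf (Fm.box n A) ∧
    F = (Fm.box (n+1) ((Fm.box n A).imp A)).imp (Fm.box n A)
def axFive (F : Fm) : Prop := ∃ A n, Linf (Fm.box n A) ∧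
    F = ((Fm.box n A).neg).imp (Fm.box (n+1) ((Fm.box n A).neg))

/-- Hilbert-style provability over `L∞` from a set of axiom (schema instances):
    classical tautologies, modus ponens, and necessitation restricted to `n > r(A)`. -/
inductive Prv (Ax : Fm → Prop) : Fm → Prop
  | ax {A : Fm} : Ax A → Prv Ax A
  | taut {A : Fm} : Linf A → Taut A → Prv Ax A
  | mp {A B : Fm} : Prv Ax (A.imp B) → Prv Ax A → Prv Ax B
  | nec {A : Fm} (n : ℕ) : Prv Ax A → BoxLt A n → Prv Ax (Fm.box n A)

def K4hAx (F : Fm) : Prop := axH F ∨ axK F ∨ axFour F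
def KD4hAx (F : Fm) : Prop := K4hAx F ∨ axD F
def S4hAx (F : Fm) : Prop := K4hAx F ∨ axT F
def GLhAx (F : Fm) : Prop := K4hAx F ∨ axL F
def KD45hAx (F : Fm) : Prop := KD4hAx F ∨ axFive F

def K4h : Fm → Prop := Prv K4hAx
def KD4h : Fm → Prop := Prv KD4hAx
def S4h : Fm → Prop := Prv S4hAx
def GLh : Fm → Prop := Prv GLhAx

def conjList (l : List Fm) : Fm := l.foldr Fm.and Fm.top
def disjList (l : List Fm) : Fm := l.foldr Fm.or Fm.bot

/-- `Γ ⊢_L A` : some finite conjunction of members of `Γ` implies `A` in `L`. -/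
def Deriv (Ax : Fm → Prop) (Γ : Set Fm) (A : Fm) : Prop :=
  ∃ l : List Fm, (∀ B ∈ l, B ∈ Γ) ∧ Prv Ax ((conjList l).imp A)

/-! The modal content is the single step `□m γ → □n (γ ∧ □m γ)` for `m < n`, obtained from
`4_h` (`□m γ → □(m+1) □m γ`) and `H` (raising box indices). Applying it to every `□m γ` and
distributing `□n` over conjunctions turns the premise into `□n A₀`, where `A₀` is the refuted
conjunction; necessitating `A₀ → ⊥` at `n` and using `K_h` yields `□n ⊥`, which `D_h` refutes. -/

theorem Linf.imp_iff {A B : Fm} : Linf (A.imp B) ↔ Linf A ∧ Linf B :=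
  ⟨fun h => by cases h; exact ⟨‹_›, ‹_›⟩, fun h => .imp h.1 h.2⟩

theorem Linf.and_iff {A B : Fm} : Linf (A.and B) ↔ Linf A ∧ Linf B :=
  ⟨fun h => by cases h; exact ⟨‹_›, ‹_›⟩, fun h => .and h.1 h.2⟩

theorem Linf.box_iff {A : Fm} {n : ℕ} : Linf (Fm.box n A) ↔ Linf A ∧ BoxLt A n :=
  ⟨fun h => by cases h; exact ⟨‹_›, ‹_›⟩, fun h => .box n h.1 h.2⟩

theorem Linf.top : Linf Fm.top := .neg .bot

theorem Linf.conjList_iff {l : List Fm} : Linf (conjList l) ↔ ∀ A ∈ l, Linf A := by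
  induction l with
  | nil => simpa [conjList] using Linf.top
  | cons B l ih => simp [conjList, List.foldr_cons, ← ih, Linf.and_iff]

section BoxLt

variable {A B : Fm} {m n : ℕ}

theorem BoxLt.mono (h : BoxLt A m) (hmn : m ≤ n) : BoxLt A n :=
  fun i hi => (h i hi).trans_le hmn

@[simp] theorem boxLt_bot : BoxLt Fm.bot n := fun _ hi => hi.elim

@[simp] theorem boxLt_imp : BoxLt (A.imp B) n ↔ BoxLt A n ∧ BoxLt B n := by
  simp [BoxLt, occursBox, or_imp, forall_and]

@[simp] theorem boxLt_and : BoxLt (A.and B) n ↔ BoxLt A n ∧ BoxLt B n := by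
  simp [BoxLt, occursBox, or_imp, forall_and]

@[simp] theorem boxLt_box : BoxLt (Fm.box m A) n ↔ m < n ∧ BoxLt A n := by
  simp [BoxLt, occursBox, or_imp, forall_and]

end BoxLt

theorem K4hAx.linf {F : Fm} (h : K4hAx F) : Linf F := by
  rcases h with ⟨A, n, hL, rfl⟩ | ⟨A, B, n, hL, rfl⟩ | ⟨A, n, hL, rfl⟩ <;>
    obtain ⟨hA, hlt⟩ := Linf.box_iff.1 hL
  · exact .imp hL (.box _ hA (hlt.mono n.le_succ))
  · obtain ⟨hA, hB⟩ := Linf.imp_iff.1 hA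
    simp only [boxLt_imp] at hlt
    exact .imp hL (.imp (.box _ hA hlt.1) (.box _ hB hlt.2))
  · exact .imp hL (.box _ hL (boxLt_box.2 ⟨n.lt_succ_self, hlt.mono n.le_succ⟩))

class K4hExtension (Ax : Fm → Prop) : Prop where
  linf_of_ax {A : Fm} : Ax A → Linf A
  ax_of_k4hAx {A : Fm} : K4hAx A → Ax A

instance : K4hExtension KD4hAx where
  linf_of_ax
    | .inl h => h.linf
    | .inr ⟨n, h⟩ => h ▸ .neg (.box n .bot boxLt_bot)
  ax_of_k4hAx := .inl

namespace Prv

variable {Ax : Fm → Prop} {A B C P : Fm} {m n : ℕ}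

theorem imp_self (hA : Linf A) : Prv Ax (A.imp A) :=
  .taut (.imp hA hA) fun v => by simp only [evalWith]; grind

theorem and_imp_left (hAB : Linf (A.and B)) : Prv Ax ((A.and B).imp A) :=
  .taut (.imp hAB (Linf.and_iff.1 hAB).1) fun v => by simp only [evalWith]; grind

theorem and_imp_right (hAB : Linf (A.and B)) : Prv Ax ((A.and B).imp B) :=
  .taut (.imp hAB (Linf.and_iff.1 hAB).2) fun v => by simp only [evalWith]; grind

variable [K4hExtension Ax]

theorem linf (h : Prv Ax A) : Linf A := by
  induction h with
  | ax hA => exact K4hExtension.linf_of_ax hA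
  | taut hL _ => exact hL
  | mp _ _ ih _ => exact (Linf.imp_iff.1 ih).2
  | nec n _ hlt ih => exact .box n ih hlt

theorem of_taut₁ (hB : Linf B) (t : Taut (A.imp B)) (h : Prv Ax A) : Prv Ax B :=
  .mp (.taut (.imp h.linf hB) t) h

theorem of_taut₂ (hC : Linf C) (t : Taut (A.imp (B.imp C))) (h₁ : Prv Ax A) (h₂ : Prv Ax B) :
    Prv Ax C :=
  .mp (of_taut₁ (.imp h₂.linf hC) t h₁) h₂

theorem imp_trans (h₁ : Prv Ax (A.imp B)) (h₂ : Prv Ax (B.imp C)) : Prv Ax (A.imp C) :=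
  of_taut₂ (.imp (Linf.imp_iff.1 h₁.linf).1 (Linf.imp_iff.1 h₂.linf).2)
    (fun v => by simp only [evalWith]; grind) h₁ h₂

theorem imp_mp (h₁ : Prv Ax (P.imp (A.imp B))) (h₂ : Prv Ax (P.imp A)) : Prv Ax (P.imp B) :=
  of_taut₂ (.imp (Linf.imp_iff.1 h₂.linf).1 (Linf.imp_iff.1 (Linf.imp_iff.1 h₁.linf).2).2)
    (fun v => by simp only [evalWith]; grind) h₁ h₂

theorem imp_intro (hA : Linf A) (h : Prv Ax B) : Prv Ax (A.imp B) :=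
  of_taut₁ (.imp hA h.linf) (fun v => by simp only [evalWith]; grind) h

theorem imp_bot_of_neg (h : Prv Ax A.neg) : Prv Ax (A.imp .bot) :=
  of_taut₁ (.imp (by cases h.linf; assumption) .bot) (fun v => by simp only [evalWith]; grind) h

theorem axK (hL : Linf (Fm.box n (A.imp B))) :
    Prv Ax ((Fm.box n (A.imp B)).imp ((Fm.box n A).imp (Fm.box n B))) :=
  .ax (K4hExtension.ax_of_k4hAx (.inr (.inl ⟨A, B, n, hL, rfl⟩)))

theorem boxK (hlt : BoxLt (A.imp B) n) (h : Prv Ax (A.imp B)) :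
    Prv Ax ((Fm.box n A).imp (Fm.box n B)) :=
  .mp (axK (.box n h.linf hlt)) (.nec n h hlt)

theorem box_imp_box_of_le (hL : Linf (Fm.box m A)) (hmn : m ≤ n) :
    Prv Ax ((Fm.box m A).imp (Fm.box n A)) := by
  obtain ⟨hA, hlt⟩ := Linf.box_iff.1 hL
  induction n, hmn using Nat.le_induction with
  | base => exact imp_self hL
  | succ k hk ih =>
    exact ih.imp_trans <| .ax <| K4hExtension.ax_of_k4hAx <|
      .inl ⟨A, k, .box k hA (hlt.mono hk), rfl⟩

theorem box_imp_box_box_of_lt (hL : Linf (Fm.box m A)) (hmn : m < n) :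
    Prv Ax ((Fm.box m A).imp (Fm.box n (Fm.box m A))) := by
  have hlt := (Linf.box_iff.1 hL).2
  have four : Prv Ax ((Fm.box m A).imp (Fm.box (m + 1) (Fm.box m A))) :=
    .ax (K4hExtension.ax_of_k4hAx (.inr (.inr ⟨A, m, hL, rfl⟩)))
  exact four.imp_trans <| box_imp_box_of_le
    (.box _ hL (boxLt_box.2 ⟨m.lt_succ_self, hlt.mono m.le_succ⟩)) hmn

theorem imp_box_and (h₁ : Prv Ax (P.imp (Fm.box n A))) (h₂ : Prv Ax (P.imp (Fm.box n B))) :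
    Prv Ax (P.imp (Fm.box n (A.and B))) := by
  obtain ⟨hA, hAlt⟩ := Linf.box_iff.1 (Linf.imp_iff.1 h₁.linf).2
  obtain ⟨hB, hBlt⟩ := Linf.box_iff.1 (Linf.imp_iff.1 h₂.linf).2
  have pair : Prv Ax (A.imp (B.imp (A.and B))) :=
    .taut (.imp hA (.imp hB (.and hA hB))) fun v => by simp only [evalWith]; grind
  have hlt : BoxLt (B.imp (A.and B)) n := by simp [hAlt, hBlt]
  have dist : Prv Ax ((Fm.box n A).imp ((Fm.box n B).imp (Fm.box n (A.and B)))) :=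
    (boxK (by simp [hAlt, hlt]) pair).imp_trans (axK (.box n (.imp hB (.and hA hB)) hlt))
  exact imp_mp (h₁.imp_trans dist) h₂

theorem conjList_imp_box_conjList {Ps As : List Fm}
    (h : List.Forall₂ (fun P A => Prv Ax (P.imp (Fm.box n A))) Ps As) :
    Prv Ax ((conjList Ps).imp (Fm.box n (conjList As))) := by
  induction h with
  | nil => exact imp_intro Linf.top (.nec n (.taut Linf.top fun _ => rfl) fun _ hi => hi.elim)
  | @cons P A Ps As hPA _ ih =>
    have hP := (Linf.imp_iff.1 hPA.linf).1
    have hPs := (Linf.imp_iff.1 ih.linf).1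
    exact imp_box_and ((and_imp_left (.and hP hPs)).imp_trans hPA)
      ((and_imp_right (.and hP hPs)).imp_trans ih)

theorem box_imp_box_and_box_of_lt (hL : Linf (Fm.box m A)) (hmn : m < n) :
    Prv Ax ((Fm.box m A).imp (Fm.box n (A.and (Fm.box m A)))) :=
  imp_box_and (box_imp_box_of_le hL hmn.le) (box_imp_box_box_of_lt hL hmn)

end Prv

theorem KD4h_boxDR_admissible_general (n : ℕ) (S : List Fm) (G : List (ℕ × Fm))
    (hn : ∀ p ∈ G, p.1 < n)
    (hS : ∀ σ ∈ S, Linf (Fm.box n σ))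
    (h : Prv KD4hAx
      ((conjList (S ++ G.map fun p => (p.2).and (Fm.box p.1 p.2))).imp Fm.bot)) :
    Prv KD4hAx
      ((conjList (S.map (Fm.box n) ++ G.map fun p => Fm.box p.1 p.2)).imp Fm.bot) := by
  have hG : ∀ p ∈ G, Linf (Fm.box p.1 p.2) := fun p hp =>
    (Linf.and_iff.1 <| Linf.conjList_iff.1 (Linf.imp_iff.1 h.linf).1 _ <|
      List.mem_append_right _ (List.mem_map_of_mem hp)).2
  have hbox := Prv.conjList_imp_box_conjList (Ax := KD4hAx) <| List.rel_append
    (List.forall₂_map_left_iff.2 <| List.forall₂_same.2 fun σ hσ => Prv.imp_self (hS σ hσ))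
    (List.forall₂_map_left_iff.2 <| List.forall₂_map_right_iff.2 <| List.forall₂_same.2
      fun p hp => Prv.box_imp_box_and_box_of_lt (hG p hp) (hn p hp))
  -- the side condition `n > r(A₀)` of necessitation holds because `□n A₀` is an `L∞`-formula
  have hbot := Prv.boxK (by simpa using (Linf.box_iff.1 (Linf.imp_iff.1 hbox.linf).2).2) h
  exact (hbox.imp_trans hbot).imp_trans (Prv.imp_bot_of_neg (.ax (.inr ⟨n, rfl⟩)))

/-- `KD4_h` admits the rule `□Dh R`. -/
theorem KD4h_boxDR_admissible (n : ℕ) (S : List Fm) (G : List (ℕ × Fm))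
    (hn : ∀ p ∈ G, p.1 < n)
    (hS : ∀ σ ∈ S, Linf (Fm.box n σ))
    (hG : ∀ p ∈ G, Linf (Fm.box p.1 p.2))
    (h : Prv KD4hAx
      ((conjList (S ++ G.map fun p => (p.2).and (Fm.box p.1 p.2))).imp Fm.bot)) :
    Prv KD4hAx
      ((conjList (S.map (Fm.box n) ++ G.map fun p => Fm.box p.1 p.2)).imp Fm.bot) :=
  KD4h_boxDR_admissible_general n S G hn hS h
end

section
/- The relativization translation preserves provability in K4_h: fix n and a formula Z ∈ L∞ with r(Z) < n; define A^Z by replacing recursively each subformula □i B with i ≥ n by □i(Z → B^Z) and leaving boxes with index < n unchanged. Then if K4_h ⊢ A, then K4_h ⊢ A^Z. -/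
/-- Relativization: replace each `□i B` with `i ≥ n` by `□i (Z → B^Z)`. -/
def relZ (n : ℕ) (Z : Fm) : Fm → Fm
  | .atom k => .atom k
  | .bot => .bot
  | .and A B => .and (relZ n Z A) (relZ n Z B)
  | .or A B => .or (relZ n Z A) (relZ n Z B)
  | .imp A B => .imp (relZ n Z A) (relZ n Z B)
  | .neg A => .neg (relZ n Z A)
  | .box i A => if i < n then .box i (relZ n Z A) else .box i (Z.imp (relZ n Z A))


-- ===== auxiliary lemmas =====

lemma boxLt_mono {A : Fm} {m k : ℕ} (h : BoxLt A m) (hmk : m ≤ k) : BoxLt A k :=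
  fun i hi => lt_of_lt_of_le (h i hi) hmk

lemma boxLt_imp_s7 {A B : Fm} {m : ℕ} (hA : BoxLt A m) (hB : BoxLt B m) :
    BoxLt (Fm.imp A B) m := fun i hi => hi.elim (hA i) (hB i)

lemma boxLt_imp_inv {A B : Fm} {m : ℕ} (h : BoxLt (Fm.imp A B) m) :
    BoxLt A m ∧ BoxLt B m :=
  ⟨fun i hi => h i (Or.inl hi), fun i hi => h i (Or.inr hi)⟩

lemma boxLt_box_s7 {A : Fm} {k m : ℕ} (hk : k < m) (hA : BoxLt A m) :
    BoxLt (Fm.box k A) m := fun i hi => hi.elim (fun h => h ▸ hk) (hA i)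

lemma boxLt_box_inv {A : Fm} {k m : ℕ} (h : BoxLt (Fm.box k A) m) :
    k < m ∧ BoxLt A m :=
  ⟨h k (Or.inl rfl), fun i hi => h i (Or.inr hi)⟩

lemma linf_box_inv {A : Fm} {m : ℕ} (h : Linf (Fm.box m A)) :
    Linf A ∧ BoxLt A m := by cases h with | box _ h1 h2 => exact ⟨h1, h2⟩

lemma linf_imp_inv {A B : Fm} (h : Linf (Fm.imp A B)) : Linf A ∧ Linf B := by
  cases h with | imp h1 h2 => exact ⟨h1, h2⟩

/-- `C^Z = C` when `n > r(C)`. -/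
lemma relZ_eq_self {n : ℕ} {Z A : Fm} (h : BoxLt A n) : relZ n Z A = A := by
  induction A with
  | atom k => rfl
  | bot => rfl
  | and A B ihA ihB =>
    have h' := boxLt_imp_inv (A := A) (B := B) h  -- same occursBox shape
    simp [relZ, ihA (fun i hi => h i (Or.inl hi)), ihB (fun i hi => h i (Or.inr hi))]
  | or A B ihA ihB =>
    simp [relZ, ihA (fun i hi => h i (Or.inl hi)), ihB (fun i hi => h i (Or.inr hi))]
  | imp A B ihA ihB =>
    simp [relZ, ihA (fun i hi => h i (Or.inl hi)), ihB (fun i hi => h i (Or.inr hi))]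
  | neg A ihA => simp [relZ, ihA (fun i hi => h i hi)]
  | box k A ihA =>
    have hk : k < n := h k (Or.inl rfl)
    simp [relZ, hk, ihA (fun i hi => h i (Or.inr hi))]

lemma occursBox_relZ {n : ℕ} {Z A : Fm} {i : ℕ}
    (h : occursBox i (relZ n Z A)) : occursBox i A ∨ occursBox i Z := by
  induction A with
  | atom k => exact absurd h id
  | bot => exact absurd h id
  | and A B ihA ihB =>
    rcases h with h | h
    · rcases ihA h with h' | h'; exacts [Or.inl (Or.inl h'), Or.inr h']
    · rcases ihB h with h' | h'; exacts [Or.inl (Or.inr h'), Or.inr h']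
  | or A B ihA ihB =>
    rcases h with h | h
    · rcases ihA h with h' | h'; exacts [Or.inl (Or.inl h'), Or.inr h']
    · rcases ihB h with h' | h'; exacts [Or.inl (Or.inr h'), Or.inr h']
  | imp A B ihA ihB =>
    rcases h with h | h
    · rcases ihA h with h' | h'; exacts [Or.inl (Or.inl h'), Or.inr h']
    · rcases ihB h with h' | h'; exacts [Or.inl (Or.inr h'), Or.inr h']
  | neg A ihA => rcases ihA h with h' | h'; exacts [Or.inl h', Or.inr h']
  | box k A ihA =>
    by_cases hk : k < n
    · simp only [relZ, if_pos hk] at h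
      rcases h with h | h
      · exact Or.inl (Or.inl h)
      · rcases ihA h with h' | h'; exacts [Or.inl (Or.inr h'), Or.inr h']
    · simp only [relZ, if_neg hk] at h
      rcases h with h | h
      · exact Or.inl (Or.inl h)
      · rcases h with h | h
        · exact Or.inr h
        · rcases ihA h with h' | h'; exacts [Or.inl (Or.inr h'), Or.inr h']

lemma boxLt_relZ {n m : ℕ} {Z A : Fm} (hn : n ≤ m) (hZ : BoxLt Z n)
    (hA : BoxLt A m) : BoxLt (relZ n Z A) m := fun i hi =>
  (occursBox_relZ hi).elim (hA i) (fun h => lt_of_lt_of_le (hZ i h) hn)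

lemma linf_relZ {n : ℕ} {Z : Fm} (hZ : Linf Z) (hr : BoxLt Z n)
    {A : Fm} (hA : Linf A) : Linf (relZ n Z A) := by
  induction hA with
  | atom k => exact .atom k
  | bot => exact .bot
  | and h1 h2 ih1 ih2 => exact .and ih1 ih2
  | or h1 h2 ih1 ih2 => exact .or ih1 ih2
  | imp h1 h2 ih1 ih2 => exact .imp ih1 ih2
  | neg h1 ih1 => exact .neg ih1
  | @box A k h1 hlt ih1 =>
    by_cases hk : k < n
    · have : relZ n Z A = A := relZ_eq_self (boxLt_mono hlt (le_of_lt hk))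
      simp only [relZ, if_pos hk, this]
      exact .box k h1 hlt
    · push_neg at hk
      simp only [relZ, if_neg (not_lt.mpr hk)]
      refine .box k (.imp hZ ih1) (boxLt_imp_s7 (boxLt_mono hr hk) (boxLt_relZ hk hr hlt))

lemma linf_of_prv {A : Fm} (h : Prv K4hAx A) : Linf A := by
  induction h with
  | ax hax =>
    rcases hax with ⟨B, m, hL, rfl⟩ | ⟨B, C, m, hL, rfl⟩ | ⟨B, m, hL, rfl⟩
    · obtain ⟨h1, h2⟩ := linf_box_inv hL
      exact .imp hL (.box _ h1 (boxLt_mono h2 (Nat.le_succ m)))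
    · obtain ⟨h1, h2⟩ := linf_box_inv hL
      obtain ⟨hB, hC⟩ := linf_imp_inv h1
      obtain ⟨hBm, hCm⟩ := boxLt_imp_inv h2
      exact .imp hL (.imp (.box _ hB hBm) (.box _ hC hCm))
    · obtain ⟨h1, h2⟩ := linf_box_inv hL
      exact .imp hL (.box _ hL (boxLt_box_s7 (Nat.lt_succ_self m) (boxLt_mono h2 (Nat.le_succ m))))
  | taut hL _ => exact hL
  | mp _ _ ih1 _ => exact (linf_imp_inv ih1).2
  | nec m _ hlt ih => exact .box m ih hlt

/-- Tautology evaluation transfers along `relZ`. -/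
lemma evalWith_relZ (n : ℕ) (Z : Fm) (v : Fm → Bool) (A : Fm) :
    evalWith v (relZ n Z A) = evalWith (fun X => evalWith v (relZ n Z X)) A := by
  induction A with
  | atom k => rfl
  | bot => rfl
  | and A B ihA ihB => simp [relZ, evalWith, ihA, ihB]
  | or A B ihA ihB => simp [relZ, evalWith, ihA, ihB]
  | imp A B ihA ihB => simp [relZ, evalWith, ihA, ihB]
  | neg A ihA => simp [relZ, evalWith, ihA]
  | box k A ihA =>
    by_cases hk : k < n <;> simp [relZ, hk, evalWith]

lemma taut_relZ {n : ℕ} {Z A : Fm} (h : Taut A) : Taut (relZ n Z A) := by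
  intro v
  rw [evalWith_relZ]
  exact h _

lemma taut_weaken (A B : Fm) : Taut (A.imp (B.imp A)) := by
  intro v
  cases hA : evalWith v A <;> cases hB : evalWith v B <;> simp [evalWith, hA, hB]

lemma taut_trans (A B C : Fm) :
    Taut ((A.imp B).imp ((B.imp C).imp (A.imp C))) := by
  intro v
  cases hA : evalWith v A <;> cases hB : evalWith v B <;> cases hC : evalWith v C <;>
    simp [evalWith, hA, hB, hC]

lemma taut_dist (Z A B : Fm) :
    Taut ((Z.imp (A.imp B)).imp ((Z.imp A).imp (Z.imp B))) := by
  intro v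
  cases hZ : evalWith v Z <;> cases hA : evalWith v A <;> cases hB : evalWith v B <;>
    simp [evalWith, hZ, hA, hB]

lemma prv_K (A B : Fm) (m : ℕ) (h : Linf (Fm.box m (A.imp B))) :
    Prv K4hAx ((Fm.box m (A.imp B)).imp ((Fm.box m A).imp (Fm.box m B))) :=
  Prv.ax (Or.inr (Or.inl ⟨A, B, m, h, rfl⟩))

lemma prv_imp_trans {A B C : Fm} (hA : Linf A) (hB : Linf B) (hC : Linf C)
    (h1 : Prv K4hAx (A.imp B)) (h2 : Prv K4hAx (B.imp C)) :
    Prv K4hAx (A.imp C) := by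
  have ht : Prv K4hAx ((A.imp B).imp ((B.imp C).imp (A.imp C))) :=
    Prv.taut (.imp (.imp hA hB) (.imp (.imp hB hC) (.imp hA hC))) (taut_trans A B C)
  exact (ht.mp h1).mp h2

lemma prv_box_mono {A B : Fm} (m : ℕ) (hA : Linf A) (hB : Linf B)
    (hAm : BoxLt A m) (hBm : BoxLt B m) (h : Prv K4hAx (A.imp B)) :
    Prv K4hAx ((Fm.box m A).imp (Fm.box m B)) :=
  (prv_K A B m (.box m (.imp hA hB) (boxLt_imp_s7 hAm hBm))).mp
    (h.nec m (boxLt_imp_s7 hAm hBm))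

lemma prv_weaken {A : Fm} (Z : Fm) (hA : Linf A) (hZ : Linf Z)
    (h : Prv K4hAx A) : Prv K4hAx (Z.imp A) :=
  (Prv.taut (.imp hA (.imp hZ hA)) (taut_weaken A Z)).mp h

/-- if `K4_h ⊢ A` then `K4_h ⊢ A^Z`, for `Z ∈ L∞` with `r(Z) < n`. -/
theorem K4h_relativization (n : ℕ) (Z : Fm) (hZ : Linf Z) (hr : BoxLt Z n)
    (A : Fm) (h : K4h A) : K4h (relZ n Z A) := by
  induction h with
  | ax hax =>
    rcases hax with ⟨B, m, hL, rfl⟩ | ⟨B, C, m, hL, rfl⟩ | ⟨B, m, hL, rfl⟩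
    · -- axiom H : □m B → □(m+1) B
      obtain ⟨hB, hBm⟩ := linf_box_inv hL
      by_cases hm : m < n
      · have hself : relZ n Z B = B := relZ_eq_self (boxLt_mono hBm hm.le)
        by_cases hm1 : m + 1 < n
        · simp only [relZ, if_pos hm, if_pos hm1, hself]
          exact Prv.ax (Or.inl ⟨B, m, hL, rfl⟩)
        · simp only [relZ, if_pos hm, if_neg hm1, hself]
          have hn1 : n ≤ m + 1 := Nat.le_of_not_lt hm1
          have hL2 : Linf (Fm.box (m+1) B) := .box _ hB (boxLt_mono hBm (Nat.le_succ m))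
          have hL3 : Linf (Fm.box (m+1) (Z.imp B)) :=
            .box _ (.imp hZ hB) (boxLt_imp_s7 (boxLt_mono hr hn1) (boxLt_mono hBm (Nat.le_succ m)))
          have h1 : Prv K4hAx ((Fm.box m B).imp (Fm.box (m+1) B)) :=
            Prv.ax (Or.inl ⟨B, m, hL, rfl⟩)
          have h2 : Prv K4hAx ((Fm.box (m+1) B).imp (Fm.box (m+1) (Z.imp B))) :=
            prv_box_mono (m+1) hB (.imp hZ hB) (boxLt_mono hBm (Nat.le_succ m))
              (boxLt_imp_s7 (boxLt_mono hr hn1) (boxLt_mono hBm (Nat.le_succ m)))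
              (Prv.taut (.imp hB (.imp hZ hB)) (taut_weaken B Z))
          exact prv_imp_trans hL hL2 hL3 h1 h2
      · push_neg at hm
        simp only [relZ, if_neg (not_lt.mpr hm), if_neg (show ¬ m + 1 < n by omega)]
        have hL' : Linf (Fm.box m (Z.imp (relZ n Z B))) := by
          have := linf_relZ hZ hr hL
          simpa [relZ, not_lt.mpr hm] using this
        exact Prv.ax (Or.inl ⟨Z.imp (relZ n Z B), m, hL', rfl⟩)
    · -- axiom K : □m (B→C) → (□m B → □m C)
      obtain ⟨h1, h2⟩ := linf_box_inv hL
      obtain ⟨hB, hC⟩ := linf_imp_inv h1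
      obtain ⟨hBm, hCm⟩ := boxLt_imp_inv h2
      by_cases hm : m < n
      · have hF : BoxLt ((Fm.box m (B.imp C)).imp ((Fm.box m B).imp (Fm.box m C))) n :=
          boxLt_imp_s7 (boxLt_box_s7 hm (boxLt_imp_s7 (boxLt_mono hBm hm.le) (boxLt_mono hCm hm.le)))
            (boxLt_imp_s7 (boxLt_box_s7 hm (boxLt_mono hBm hm.le))
              (boxLt_box_s7 hm (boxLt_mono hCm hm.le)))
        rw [relZ_eq_self hF]
        exact Prv.ax (Or.inr (Or.inl ⟨B, C, m, hL, rfl⟩))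
      · push_neg at hm
        simp only [relZ, if_neg (not_lt.mpr hm)]
        have hB' : Linf (relZ n Z B) := linf_relZ hZ hr hB
        have hC' : Linf (relZ n Z C) := linf_relZ hZ hr hC
        have hBm' : BoxLt (relZ n Z B) m := boxLt_relZ hm hr hBm
        have hCm' : BoxLt (relZ n Z C) m := boxLt_relZ hm hr hCm
        have hZm : BoxLt Z m := boxLt_mono hr hm
        set B' := relZ n Z B
        set C' := relZ n Z C
        have hLP : Linf (Z.imp (B'.imp C')) := .imp hZ (.imp hB' hC')
        have hLQ : Linf (Z.imp B') := .imp hZ hB'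
        have hLR : Linf (Z.imp C') := .imp hZ hC'
        have hPm : BoxLt (Z.imp (B'.imp C')) m := boxLt_imp_s7 hZm (boxLt_imp_s7 hBm' hCm')
        have hQm : BoxLt (Z.imp B') m := boxLt_imp_s7 hZm hBm'
        have hRm : BoxLt (Z.imp C') m := boxLt_imp_s7 hZm hCm'
        have h0 : Prv K4hAx ((Z.imp (B'.imp C')).imp ((Z.imp B').imp (Z.imp C'))) :=
          Prv.taut (.imp hLP (.imp hLQ hLR)) (taut_dist Z B' C')
        have step1 : Prv K4hAx
            ((Fm.box m (Z.imp (B'.imp C'))).imp (Fm.box m ((Z.imp B').imp (Z.imp C')))) :=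
          prv_box_mono m hLP (.imp hLQ hLR) hPm (boxLt_imp_s7 hQm hRm) h0
        have step2 : Prv K4hAx
            ((Fm.box m ((Z.imp B').imp (Z.imp C'))).imp
              ((Fm.box m (Z.imp B')).imp (Fm.box m (Z.imp C')))) :=
          prv_K _ _ m (.box m (.imp hLQ hLR) (boxLt_imp_s7 hQm hRm))
        exact prv_imp_trans (.box m hLP hPm) (.box m (.imp hLQ hLR) (boxLt_imp_s7 hQm hRm))
          (.imp (.box m hLQ hQm) (.box m hLR hRm)) step1 step2
    · -- axiom 4 : □m B → □(m+1) □m B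
      obtain ⟨hB, hBm⟩ := linf_box_inv hL
      by_cases hm : m < n
      · have hself : relZ n Z B = B := relZ_eq_self (boxLt_mono hBm hm.le)
        by_cases hm1 : m + 1 < n
        · simp only [relZ, if_pos hm, if_pos hm1, hself]
          exact Prv.ax (Or.inr (Or.inr ⟨B, m, hL, rfl⟩))
        · simp only [relZ, if_pos hm, if_neg hm1, hself]
          have hn1 : n ≤ m + 1 := Nat.le_of_not_lt hm1
          have hbox : BoxLt (Fm.box m B) (m+1) :=
            boxLt_box_s7 (Nat.lt_succ_self m) (boxLt_mono hBm (Nat.le_succ m))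
          have hL2 : Linf (Fm.box (m+1) (Fm.box m B)) := .box _ hL hbox
          have hL3 : Linf (Fm.box (m+1) (Z.imp (Fm.box m B))) :=
            .box _ (.imp hZ hL) (boxLt_imp_s7 (boxLt_mono hr hn1) hbox)
          have h1 : Prv K4hAx ((Fm.box m B).imp (Fm.box (m+1) (Fm.box m B))) :=
            Prv.ax (Or.inr (Or.inr ⟨B, m, hL, rfl⟩))
          have h2 : Prv K4hAx
              ((Fm.box (m+1) (Fm.box m B)).imp (Fm.box (m+1) (Z.imp (Fm.box m B)))) :=
            prv_box_mono (m+1) hL (.imp hZ hL) hbox (boxLt_imp_s7 (boxLt_mono hr hn1) hbox)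
              (Prv.taut (.imp hL (.imp hZ hL)) (taut_weaken (Fm.box m B) Z))
          exact prv_imp_trans hL hL2 hL3 h1 h2
      · push_neg at hm
        simp only [relZ, if_neg (not_lt.mpr hm), if_neg (show ¬ m + 1 < n by omega)]
        set B' := relZ n Z B
        have hW : Linf (Fm.box m (Z.imp B')) := by
          have := linf_relZ hZ hr hL
          simpa [relZ, not_lt.mpr hm, B'] using this
        obtain ⟨hWi, hWm⟩ := linf_box_inv hW
        have hbox : BoxLt (Fm.box m (Z.imp B')) (m+1) :=
          boxLt_box_s7 (Nat.lt_succ_self m) (boxLt_mono hWm (Nat.le_succ m))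
        have hZm1 : BoxLt Z (m+1) := boxLt_mono hr (by omega)
        have hL2 : Linf (Fm.box (m+1) (Fm.box m (Z.imp B'))) := .box _ hW hbox
        have hL3 : Linf (Fm.box (m+1) (Z.imp (Fm.box m (Z.imp B')))) :=
          .box _ (.imp hZ hW) (boxLt_imp_s7 hZm1 hbox)
        have h1 : Prv K4hAx
            ((Fm.box m (Z.imp B')).imp (Fm.box (m+1) (Fm.box m (Z.imp B')))) :=
          Prv.ax (Or.inr (Or.inr ⟨Z.imp B', m, hW, rfl⟩))
        have h2 : Prv K4hAx ((Fm.box (m+1) (Fm.box m (Z.imp B'))).imp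
            (Fm.box (m+1) (Z.imp (Fm.box m (Z.imp B'))))) :=
          prv_box_mono (m+1) hW (.imp hZ hW) hbox (boxLt_imp_s7 hZm1 hbox)
            (Prv.taut (.imp hW (.imp hZ hW)) (taut_weaken (Fm.box m (Z.imp B')) Z))
        exact prv_imp_trans hW hL2 hL3 h1 h2
  | taut hL hT => exact Prv.taut (linf_relZ hZ hr hL) (taut_relZ hT)
  | mp h1 h2 ih1 ih2 =>
    simp only [relZ] at ih1
    exact ih1.mp ih2
  | nec m hprv hlt ih =>
    have hB : Linf _ := linf_of_prv hprv
    by_cases hm : m < n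
    · have hself := relZ_eq_self (Z := Z) (boxLt_mono hlt hm.le)
      simp only [relZ, if_pos hm, hself]
      exact hprv.nec m hlt
    · push_neg at hm
      simp only [relZ, if_neg (not_lt.mpr hm)]
      have hB' : Linf (relZ n Z _) := linf_relZ hZ hr hB
      have h1 : Prv K4hAx (Z.imp (relZ n Z _)) := prv_weaken Z hB' hZ ih
      exact h1.nec m (boxLt_imp_s7 (boxLt_mono hr hm) (boxLt_relZ hm hr hlt))
end
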